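/- Under the stated assumptions, for all ℓ, h ∈ (0,1], ∫_{−∞}^{∞} E(|δ_{ℓ,h}(x)|) dx ≤ ∫_{b(I_ε)} E(|𝔟̂_h⁻¹(z) − b⁻¹(z)|) dz, where δ_{ℓ,h}(x) = ∫_{b(r_ε)}^{b(l_ε)} ∫_{−∞}^{−x} ( K_ℓ(−𝔟̂_h⁻¹(z) − y) − K_ℓ(−b⁻¹(z) − y) ) dy dz. -/

import Mathlib

open MeasureTheory

/-- The rescaled kernel `K_η(x) = η⁻¹ K(x/η)`. -/
noncomputable def Kh (K : ℝ → ℝ) (η x : ℝ) : ℝ := η⁻¹ * K (x / η)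

/-- The estimator `𝔟̂_h⁻¹(w) = l₀ - 2ε + ∫_{I_{2ε}} ∫_{-∞}^{-w} K_h(-g(z) - y) dy dz`
of the inverse of `b`, computed from an estimation `g` of `b`. -/
noncomputable def binvEst (K : ℝ → ℝ) (l₀ r₀ ε h : ℝ) (g : ℝ → ℝ) (w : ℝ) : ℝ :=
  (l₀ - 2 * ε) +
    ∫ z in Set.Icc (l₀ - 2 * ε) (r₀ + 2 * ε), ∫ y in Set.Iic (-w), Kh K h (-(g z) - y)

open Set ProbabilityTheory
open scoped ENNReal

/-!
Let `F` be the cdf of the law with density `y ↦ K_ℓ(-y)`. Then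
`∫_{y ≤ -x} K_ℓ(-c - y) dy = F(c - x)`, so `δ_{ℓ,h}(x)` is the integral over `b(I_ε)` of
`F(𝔟̂_h⁻¹(z) - x) - F(b⁻¹(z) - x)`. For any cdf, `∫ |F(a - x) - F(c - x)| dx = |a - c|`
(Tonelli on the region `c - x < u ≤ a - x`), so moving the absolute value inside the `z`-integral
and exchanging the order of integration gives the bound. Finiteness of the right-hand side, needed
to pass from lower Lebesgue integrals back to Bochner integrals, holds because `𝔟̂_h⁻¹` takes values
in `I_{2ε}`.
-/

theorem lintegral_measure_Ioc_sub (μ : Measure ℝ) [SFinite μ] (a c : ℝ) :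
    ∫⁻ x, μ (Ioc (c - x) (a - x)) = ENNReal.ofReal (a - c) * μ univ := by
  have hs : MeasurableSet {p : ℝ × ℝ | c - p.1 < p.2 ∧ p.2 ≤ a - p.1} := by measurability
  have hslice : ∀ u : ℝ, (fun x => (x, u)) ⁻¹' {p : ℝ × ℝ | c - p.1 < p.2 ∧ p.2 ≤ a - p.1}
      = Ioc (c - u) (a - u) := by
    intro u; ext x; simp only [mem_preimage, mem_ofPred_eq, mem_Ioc]
    constructor <;> rintro ⟨h₁, h₂⟩ <;> constructor <;> linarith
  calc ∫⁻ x, μ (Ioc (c - x) (a - x))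
      = (volume.prod μ) {p : ℝ × ℝ | c - p.1 < p.2 ∧ p.2 ≤ a - p.1} := by
        rw [Measure.prod_apply hs]; rfl
    _ = ∫⁻ u, ENNReal.ofReal (a - c) ∂μ := by
        rw [Measure.prod_apply_symm hs]
        simp only [hslice, Real.volume_Ioc, sub_sub_sub_cancel_right]
    _ = ENNReal.ofReal (a - c) * μ univ := lintegral_const _

theorem lintegral_enorm_cdf_sub_cdf (μ : Measure ℝ) [IsProbabilityMeasure μ] (a c : ℝ) :
    ∫⁻ x, ‖cdf μ (a - x) - cdf μ (c - x)‖ₑ = ‖a - c‖ₑ := by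
  wlog hca : c ≤ a generalizing a c
  · simpa only [enorm_sub_rev] using this c a (le_of_not_ge hca)
  have hIoc : ∀ x, ‖cdf μ (a - x) - cdf μ (c - x)‖ₑ = μ (Ioc (c - x) (a - x)) := by
    intro x
    have := (cdf μ).measure_Ioc (c - x) (a - x)
    rw [measure_cdf] at this
    rw [this, Real.enorm_eq_ofReal (sub_nonneg.2 (monotone_cdf μ (by linarith)))]
  simp_rw [hIoc, lintegral_measure_Ioc_sub, measure_univ, mul_one]
  rw [Real.enorm_eq_ofReal (sub_nonneg.2 hca)]

theorem measurable_cdf_sub_cdf {Ω Z : Type*} [MeasurableSpace Ω] [MeasurableSpace Z]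
    (μ : Measure ℝ) {A : Ω → Z → ℝ} {B : Z → ℝ} (hA : Measurable fun p : Ω × Z => A p.1 p.2)
    (hB : Measurable B) :
    Measurable fun q : (ℝ × Ω) × Z => cdf μ (A q.1.2 q.2 - q.1.1) - cdf μ (B q.2 - q.1.1) :=
  have hF : Measurable (cdf μ) := (monotone_cdf μ).measurable
  (hF.comp ((hA.comp (measurable_fst.snd.prodMk measurable_snd)).sub measurable_fst.fst)).sub
    (hF.comp ((hB.comp measurable_snd).sub measurable_fst.fst))

theorem lintegral_lintegral_enorm_integral_cdf_sub_le {Ω Z : Type*} [MeasurableSpace Ω]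
    [MeasurableSpace Z] (μ : Measure ℝ) [IsProbabilityMeasure μ] (P : Measure Ω) [SFinite P]
    (ν : Measure Z) [SFinite ν] {A : Ω → Z → ℝ} {B : Z → ℝ}
    (hA : Measurable fun p : Ω × Z => A p.1 p.2) (hB : Measurable B) :
    ∫⁻ x, ∫⁻ ω, ‖∫ z, (cdf μ (A ω z - x) - cdf μ (B z - x)) ∂ν‖ₑ ∂P
      ≤ ∫⁻ z, ∫⁻ ω, ‖A ω z - B z‖ₑ ∂P ∂ν := by
  set g : ℝ → Ω → Z → ℝ≥0∞ := fun x ω z => ‖cdf μ (A ω z - x) - cdf μ (B z - x)‖ₑ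
  have hg : Measurable fun q : (ℝ × Ω) × Z => g q.1.1 q.1.2 q.2 :=
    (measurable_cdf_sub_cdf μ hA hB).enorm
  calc ∫⁻ x, ∫⁻ ω, ‖∫ z, (cdf μ (A ω z - x) - cdf μ (B z - x)) ∂ν‖ₑ ∂P
      ≤ ∫⁻ x, ∫⁻ ω, ∫⁻ z, g x ω z ∂ν ∂P :=
        lintegral_mono fun x => lintegral_mono fun ω => enorm_integral_le_lintegral_enorm _
    _ = ∫⁻ ω, ∫⁻ x, ∫⁻ z, g x ω z ∂ν ∂volume ∂P :=
        lintegral_lintegral_swap hg.lintegral_prod_right'.aemeasurable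
    _ = ∫⁻ ω, ∫⁻ z, ∫⁻ x, g x ω z ∂volume ∂ν ∂P := by
        refine lintegral_congr fun ω => lintegral_lintegral_swap ?_
        exact (hg.comp ((measurable_fst.prodMk measurable_const).prodMk
          measurable_snd)).aemeasurable
    _ = ∫⁻ ω, ∫⁻ z, ‖A ω z - B z‖ₑ ∂ν ∂P := by
        simp only [g, lintegral_enorm_cdf_sub_cdf]
    _ = ∫⁻ z, ∫⁻ ω, ‖A ω z - B z‖ₑ ∂P ∂ν :=
        lintegral_lintegral_swap (hA.sub (hB.comp measurable_snd)).enorm.aemeasurable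

theorem integral_integral_abs_eq_toReal_lintegral {X Y : Type*} [MeasurableSpace X]
    [MeasurableSpace Y] {μ : Measure X} {P : Measure Y} [SFinite P] {f : X → Y → ℝ}
    (hf : Measurable fun p : X × Y => f p.1 p.2) (hfin : ∫⁻ x, ∫⁻ y, ‖f x y‖ₑ ∂P ∂μ ≠ ∞) :
    ∫ x, ∫ y, |f x y| ∂P ∂μ = (∫⁻ x, ∫⁻ y, ‖f x y‖ₑ ∂P ∂μ).toReal := by
  have hinner : ∀ x, ∫ y, |f x y| ∂P = (∫⁻ y, ‖f x y‖ₑ ∂P).toReal := fun x =>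
    integral_norm_eq_lintegral_enorm (hf.comp measurable_prodMk_left).aestronglyMeasurable
  have hmeas : Measurable fun x => ∫⁻ y, ‖f x y‖ₑ ∂P := hf.enorm.lintegral_prod_right'
  simp_rw [hinner]
  exact integral_toReal hmeas.aemeasurable (ae_lt_top hmeas hfin)

theorem integral_integral_abs_integral_cdf_sub_le {Ω Z : Type*} [MeasurableSpace Ω]
    [MeasurableSpace Z] (μ : Measure ℝ) [IsProbabilityMeasure μ] (P : Measure Ω)
    [IsFiniteMeasure P] (ν : Measure Z) [IsFiniteMeasure ν] {A : Ω → Z → ℝ} {B : Z → ℝ}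
    (hA : Measurable fun p : Ω × Z => A p.1 p.2) (hB : Measurable B) {C : ℝ}
    (hC : ∀ ω z, |A ω z - B z| ≤ C) :
    ∫ x, ∫ ω, |∫ z, (cdf μ (A ω z - x) - cdf μ (B z - x)) ∂ν| ∂P
      ≤ ∫ z, ∫ ω, |A ω z - B z| ∂P ∂ν := by
  have hδ : Measurable fun p : ℝ × Ω => ∫ z, (cdf μ (A p.2 z - p.1) - cdf μ (B z - p.1)) ∂ν :=
    (measurable_cdf_sub_cdf μ hA hB).stronglyMeasurable.integral_prod_right'.measurable
  have hfin : ∫⁻ z, ∫⁻ ω, ‖A ω z - B z‖ₑ ∂P ∂ν ≠ ∞ := by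
    refine ne_top_of_le_ne_top (b := ∫⁻ _, ∫⁻ _, ENNReal.ofReal C ∂P ∂ν) ?_ ?_
    · simp [lintegral_const, ENNReal.mul_ne_top, measure_ne_top]
    · refine lintegral_mono fun z => lintegral_mono fun ω => ?_
      rw [← ofReal_norm]
      exact ENNReal.ofReal_le_ofReal (hC ω z)
  have hAB : Measurable fun p : Z × Ω => A p.2 p.1 - B p.1 :=
    (hA.comp measurable_swap).sub (hB.comp measurable_fst)
  have hle := lintegral_lintegral_enorm_integral_cdf_sub_le μ P ν hA hB
  rw [integral_integral_abs_eq_toReal_lintegral hδ (ne_top_of_le_ne_top hfin hle),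
    integral_integral_abs_eq_toReal_lintegral hAB hfin]
  exact ENNReal.toReal_mono hfin hle

/-- The law of `-U` for `U` with density `κ`, chosen so that `∫_{y ≤ -x} κ(-c - y) dy` is its
cdf at `c - x`. -/
noncomputable def negDensityMeasure (κ : ℝ → ℝ) : Measure ℝ :=
  volume.withDensity fun v => ENNReal.ofReal (κ (-v))

section negDensityMeasure

variable {κ : ℝ → ℝ}

theorem isProbabilityMeasure_negDensityMeasure (hκ : Integrable κ) (hκ0 : ∀ v, 0 ≤ κ v)
    (hκ1 : ∫ v, κ v = 1) : IsProbabilityMeasure (negDensityMeasure κ) := by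
  constructor
  rw [negDensityMeasure, withDensity_apply _ MeasurableSet.univ, Measure.restrict_univ,
    ← ofReal_integral_eq_lintegral_ofReal hκ.comp_neg (.of_forall fun v => hκ0 _),
    integral_neg_eq_self, hκ1, ENNReal.ofReal_one]

theorem setIntegral_Iic_comp_sub_eq_cdf (hκ : Integrable κ) (hκ0 : ∀ v, 0 ≤ κ v)
    (hκ1 : ∫ v, κ v = 1) (c x : ℝ) :
    ∫ y in Iic (-x), κ (-c - y) = cdf (negDensityMeasure κ) (c - x) := by
  have := isProbabilityMeasure_negDensityMeasure hκ hκ0 hκ1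
  have hshift := (measurePreserving_add_right volume c).setIntegral_preimage_emb
    (measurableEmbedding_addRight c) (fun v => κ (-v)) (Iic (c - x))
  rw [preimage_add_const_Iic, sub_sub_cancel_left] at hshift
  rw [cdf_eq_real, measureReal_def, negDensityMeasure, withDensity_apply _ measurableSet_Iic,
    ← ofReal_integral_eq_lintegral_ofReal hκ.comp_neg.integrableOn (.of_forall fun v => hκ0 _),
    ENNReal.toReal_ofReal (setIntegral_nonneg measurableSet_Iic fun v _ => hκ0 _), ← hshift]
  simp only [neg_add_rev, ← sub_eq_add_neg]

theorem setIntegral_Iic_sub_eq_cdf_sub (hκ : Integrable κ) (hκ0 : ∀ v, 0 ≤ κ v)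
    (hκ1 : ∫ v, κ v = 1) (c d x : ℝ) :
    ∫ y in Iic (-x), (κ (-c - y) - κ (-d - y))
      = cdf (negDensityMeasure κ) (c - x) - cdf (negDensityMeasure κ) (d - x) := by
  rw [integral_sub (hκ.comp_sub_left _).integrableOn (hκ.comp_sub_left _).integrableOn,
    setIntegral_Iic_comp_sub_eq_cdf hκ hκ0 hκ1, setIntegral_Iic_comp_sub_eq_cdf hκ hκ0 hκ1]

theorem intervalIntegral_setIntegral_Iic_sub_eq_integral_cdf_sub (hκ : Integrable κ)
    (hκ0 : ∀ v, 0 ≤ κ v) (hκ1 : ∫ v, κ v = 1) {a₁ a₂ : ℝ} (ha : a₁ ≤ a₂) {c d D : ℝ → ℝ}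
    (hD : EqOn D d (Icc a₁ a₂)) (x : ℝ) :
    ∫ z in a₁..a₂, ∫ y in Iic (-x), (κ (-c z - y) - κ (-d z - y))
      = ∫ z in Icc a₁ a₂,
          (cdf (negDensityMeasure κ) (c z - x) - cdf (negDensityMeasure κ) (D z - x)) := by
  rw [intervalIntegral.integral_of_le ha, ← integral_Icc_eq_integral_Ioc]
  refine setIntegral_congr_fun measurableSet_Icc fun z hz => ?_
  rw [setIntegral_Iic_sub_eq_cdf_sub hκ hκ0 hκ1, hD hz]

end negDensityMeasure

section Kh

variable {K : ℝ → ℝ} {η : ℝ}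

theorem Kh_nonneg (hK0 : ∀ y, 0 ≤ K y) (hη : 0 < η) (x : ℝ) : 0 ≤ Kh K η x :=
  mul_nonneg (inv_nonneg.2 hη.le) (hK0 _)

theorem Continuous.integrable_of_forall_one_lt_abs_eq_zero (hK : Continuous K)
    (hKsupp : ∀ y, 1 < |y| → K y = 0) : Integrable K := by
  refine hK.integrable_of_hasCompactSupport (.intro (isCompact_Icc (a := -1) (b := 1)) ?_)
  exact fun y hy => hKsupp y (lt_of_not_ge fun h => hy (abs_le.1 h))

theorem integrable_Kh (hK : Integrable K) (hη : 0 < η) : Integrable (Kh K η) :=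
  (hK.comp_div hη.ne').const_mul η⁻¹

theorem integral_Kh (hK1 : ∫ y, K y = 1) (hη : 0 < η) : ∫ x, Kh K η x = 1 := by
  simp only [Kh]
  rw [integral_const_mul, Measure.integral_comp_div K η, hK1, abs_of_pos hη, smul_eq_mul,
    mul_one, inv_mul_cancel₀ hη.ne']

end Kh

section LeftInverse

variable {b binv : ℝ → ℝ} {p q : ℝ}

theorem mapsTo_Icc_of_leftInvOn (hpq : p ≤ q) (hb : ContinuousOn b (Icc p q))
    (hinv : ∀ x ∈ Icc p q, binv (b x) = x) : MapsTo binv (Icc (b q) (b p)) (Icc p q) := by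
  intro z hz
  obtain ⟨x, hx, rfl⟩ := intermediate_value_Icc' hpq hb hz
  rwa [hinv x hx]

theorem antitoneOn_Icc_of_leftInvOn (hpq : p ≤ q) (hb : ContinuousOn b (Icc p q))
    (hanti : AntitoneOn b (Icc p q)) (hinv : ∀ x ∈ Icc p q, binv (b x) = x) :
    AntitoneOn binv (Icc (b q) (b p)) := by
  intro z₁ hz₁ z₂ hz₂ hz
  obtain ⟨x₁, hx₁, rfl⟩ := intermediate_value_Icc' hpq hb hz₁
  obtain ⟨x₂, hx₂, rfl⟩ := intermediate_value_Icc' hpq hb hz₂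
  rw [hinv x₁ hx₁, hinv x₂ hx₂]
  by_contra! hx
  have : b x₁ = b x₂ := le_antisymm hz (hanti hx₁ hx₂ hx.le)
  exact hx.ne (by rw [← hinv x₁ hx₁, this, hinv x₂ hx₂])

theorem exists_measurable_eqOn_of_leftInvOn (hpq : p ≤ q) (hb : ContinuousOn b (Icc p q))
    (hanti : AntitoneOn b (Icc p q)) (hinv : ∀ x ∈ Icc p q, binv (b x) = x) :
    ∃ B : ℝ → ℝ, Measurable B ∧ EqOn B binv (Icc (b q) (b p)) ∧ ∀ z, B z ∈ Icc p q := by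
  have hbqp : b q ≤ b p := hanti (left_mem_Icc.2 hpq) (right_mem_Icc.2 hpq) hpq
  have hB := antitoneOn_Icc_of_leftInvOn hpq hb hanti hinv
  refine ⟨fun z => binv (projIcc (b q) (b p) hbqp z), ?_, fun z hz => ?_, fun z => ?_⟩
  · exact Antitone.measurable fun z₁ z₂ hz =>
      hB (projIcc _ _ _ z₁).2 (projIcc _ _ _ z₂).2 (monotone_projIcc hbqp hz)
  · simp only [projIcc_of_mem hbqp hz]
  · exact mapsTo_Icc_of_leftInvOn hpq hb hinv (projIcc _ _ _ z).2

end LeftInverse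

section binvEst

variable {K : ℝ → ℝ} {l₀ r₀ ε h : ℝ}

theorem binvEst_eq_cdf (hK : Integrable K) (hK0 : ∀ y, 0 ≤ K y) (hK1 : ∫ y, K y = 1)
    (hh : 0 < h) (g : ℝ → ℝ) (w : ℝ) :
    binvEst K l₀ r₀ ε h g w = (l₀ - 2 * ε) +
      ∫ z in Icc (l₀ - 2 * ε) (r₀ + 2 * ε), cdf (negDensityMeasure (Kh K h)) (g z - w) := by
  simp only [binvEst, setIntegral_Iic_comp_sub_eq_cdf (integrable_Kh hK hh) (Kh_nonneg hK0 hh)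
    (integral_Kh hK1 hh)]

theorem binvEst_mem_Icc (hK : Integrable K) (hK0 : ∀ y, 0 ≤ K y) (hK1 : ∫ y, K y = 1)
    (hh : 0 < h) (hlr : l₀ - 2 * ε ≤ r₀ + 2 * ε) (g : ℝ → ℝ) (w : ℝ) :
    binvEst K l₀ r₀ ε h g w ∈ Icc (l₀ - 2 * ε) (r₀ + 2 * ε) := by
  have := isProbabilityMeasure_negDensityMeasure (integrable_Kh hK hh) (Kh_nonneg hK0 hh)
    (integral_Kh hK1 hh)
  set I := ∫ z in Icc (l₀ - 2 * ε) (r₀ + 2 * ε), cdf (negDensityMeasure (Kh K h)) (g z - w)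
  have hI_nonneg : 0 ≤ I := setIntegral_nonneg measurableSet_Icc fun z _ => cdf_nonneg _ _
  have hI_le := norm_setIntegral_le_of_norm_le_const (C := 1)
    (f := fun z => cdf (negDensityMeasure (Kh K h)) (g z - w))
    (measure_Icc_lt_top (μ := volume) (a := l₀ - 2 * ε) (b := r₀ + 2 * ε)) fun z _ => by
      rw [Real.norm_of_nonneg (cdf_nonneg _ _)]; exact cdf_le_one _ _
  rw [Real.norm_of_nonneg hI_nonneg, one_mul, Real.volume_real_Icc_of_le hlr] at hI_le
  rw [binvEst_eq_cdf hK hK0 hK1 hh]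
  constructor <;> linarith

theorem measurable_binvEst {Ω : Type*} [MeasurableSpace Ω] (hK : Integrable K)
    (hK0 : ∀ y, 0 ≤ K y) (hK1 : ∫ y, K y = 1) (hh : 0 < h) {g : Ω → ℝ → ℝ}
    (hg : Measurable (Function.uncurry g)) :
    Measurable fun p : Ω × ℝ => binvEst K l₀ r₀ ε h (g p.1) p.2 := by
  simp only [binvEst_eq_cdf hK hK0 hK1 hh]
  refine measurable_const.add ?_
  refine (Measurable.stronglyMeasurable (f := fun q : (Ω × ℝ) × ℝ =>
    cdf (negDensityMeasure (Kh K h)) (g q.1.1 q.2 - q.1.2)) ?_).integral_prod_right'.measurable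
  exact (monotone_cdf _).measurable.comp
    ((hg.comp (measurable_fst.fst.prodMk measurable_snd)).sub measurable_fst.snd)

end binvEst

theorem stmt8_general (l₀ r₀ ε mb : ℝ) (K b b' binv : ℝ → ℝ)
    (hlr : l₀ < r₀) (hε : 0 < ε) (hmb : 0 < mb)
    -- kernel assumptions
    (hK0 : ∀ y, 0 ≤ K y) (hK2 : ContDiff ℝ 2 K)
    (hKsupp : ∀ y, 1 < |y| → K y = 0) (hKint : ∫ y, K y = 1)
    -- `b` is continuously differentiable on `I_{2ε}` with `b' ≤ -mb` there
    (hbd : ∀ x ∈ Set.Icc (l₀ - 2 * ε) (r₀ + 2 * ε), HasDerivAt b (b' x) x)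
    (hb'le : ∀ x ∈ Set.Icc (l₀ - 2 * ε) (r₀ + 2 * ε), b' x ≤ -mb)
    -- `binv` is the inverse of `b` on `I_{2ε}`
    (hbinv : ∀ x ∈ Set.Icc (l₀ - 2 * ε) (r₀ + 2 * ε), binv (b x) = x)
    -- the probability space and the estimator `b̂`
    (Ω : Type) [MeasurableSpace Ω] (P : Measure Ω) [IsProbabilityMeasure P]
    (bhat : Ω → ℝ → ℝ) (hbhat : Measurable (Function.uncurry bhat))
    -- the bandwidths
    (ℓ h : ℝ) (hℓ0 : 0 < ℓ) (hh0 : 0 < h) :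
    (∫ x : ℝ, ∫ ω,
        |∫ z in (b (r₀ + ε))..(b (l₀ - ε)), ∫ y in Set.Iic (-x),
            (Kh K ℓ (-(binvEst K l₀ r₀ ε h (bhat ω) z) - y)
              - Kh K ℓ (-(binv z) - y))| ∂P) ≤
      ∫ z in Set.Icc (b (r₀ + ε)) (b (l₀ - ε)),
        ∫ ω, |binvEst K l₀ r₀ ε h (bhat ω) z - binv z| ∂P := by
  have hK : Integrable K := hK2.continuous.integrable_of_forall_one_lt_abs_eq_zero hKsupp
  have hKℓ := integrable_Kh hK hℓ0
  have hIε : Icc (l₀ - ε) (r₀ + ε) ⊆ Icc (l₀ - 2 * ε) (r₀ + 2 * ε) :=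
    Icc_subset_Icc (by linarith) (by linarith)
  have hb_cont : ContinuousOn b (Icc (l₀ - ε) (r₀ + ε)) :=
    fun x hx => (hbd x (hIε hx)).continuousAt.continuousWithinAt
  have hb_anti : AntitoneOn b (Icc (l₀ - ε) (r₀ + ε)) :=
    antitoneOn_of_hasDerivWithinAt_nonpos (convex_Icc _ _) hb_cont
      (fun x hx => (hbd x (hIε (interior_subset hx))).hasDerivWithinAt)
      (fun x hx => (hb'le x (hIε (interior_subset hx))).trans (neg_nonpos.2 hmb.le))
  obtain ⟨B, hB, hB_eq, hB_mem⟩ := exists_measurable_eqOn_of_leftInvOn (by linarith) hb_cont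
    hb_anti fun x hx => hbinv x (hIε hx)
  have hab : b (r₀ + ε) ≤ b (l₀ - ε) := hb_anti (left_mem_Icc.2 (by linarith))
    (right_mem_Icc.2 (by linarith)) (by linarith)
  have := isProbabilityMeasure_negDensityMeasure hKℓ (Kh_nonneg hK0 hℓ0) (integral_Kh hKint hℓ0)
  simp only [intervalIntegral_setIntegral_Iic_sub_eq_integral_cdf_sub hKℓ (Kh_nonneg hK0 hℓ0)
    (integral_Kh hKint hℓ0) hab hB_eq]
  have hbound : ∀ ω z, |binvEst K l₀ r₀ ε h (bhat ω) z - B z| ≤ r₀ + 2 * ε - (l₀ - 2 * ε) :=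
    fun ω z => Real.dist_le_of_mem_Icc
      (binvEst_mem_Icc hK hK0 hKint hh0 (by linarith) (bhat ω) z) (hIε (hB_mem z))
  calc _ ≤ ∫ z in Icc (b (r₀ + ε)) (b (l₀ - ε)),
          ∫ ω, |binvEst K l₀ r₀ ε h (bhat ω) z - B z| ∂P :=
        integral_integral_abs_integral_cdf_sub_le _ P _
          (measurable_binvEst hK hK0 hKint hh0 hbhat) hB hbound
    _ = _ := setIntegral_congr_fun measurableSet_Icc fun z hz => by rw [hB_eq hz]

/-- Bound on `∫ E(|δ_{ℓ,h}(x)|) dx`, where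
`δ_{ℓ,h}(x) = ∫_{b(r_ε)}^{b(l_ε)} ∫_{-∞}^{-x} (K_ℓ(-𝔟̂_h⁻¹(z) - y) - K_ℓ(-b⁻¹(z) - y)) dy dz`. -/
theorem stmt8 (l₀ r₀ ε mb : ℝ) (K b b' binv : ℝ → ℝ)
    (hlr : l₀ < r₀) (hε : 0 < ε) (hε1 : ε ≤ 1) (hmb : 0 < mb)
    -- kernel assumptions
    (hK0 : ∀ y, 0 ≤ K y) (hK2 : ContDiff ℝ 2 K) (hKsymm : ∀ y, K (-y) = K y)
    (hKsupp : ∀ y, 1 < |y| → K y = 0) (hKint : ∫ y, K y = 1)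
    -- `b` is continuously differentiable on `I_{2ε}` with `b' ≤ -mb` there
    (hbd : ∀ x ∈ Set.Icc (l₀ - 2 * ε) (r₀ + 2 * ε), HasDerivAt b (b' x) x)
    (hb'c : ContinuousOn b' (Set.Icc (l₀ - 2 * ε) (r₀ + 2 * ε)))
    (hb'le : ∀ x ∈ Set.Icc (l₀ - 2 * ε) (r₀ + 2 * ε), b' x ≤ -mb)
    -- `binv` is the inverse of `b` on `I_{2ε}`
    (hbinv : ∀ x ∈ Set.Icc (l₀ - 2 * ε) (r₀ + 2 * ε), binv (b x) = x)
    -- the probability space and the estimator `b̂`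
    (Ω : Type) [MeasurableSpace Ω] (P : Measure Ω) [IsProbabilityMeasure P]
    (bhat : Ω → ℝ → ℝ) (hbhat : Measurable (Function.uncurry bhat))
    (hsq : ∀ x ∈ Set.Icc (l₀ - 2 * ε) (r₀ + 2 * ε),
      Integrable (fun ω => |bhat ω x - b x| ^ 2) P)
    -- the bandwidths
    (ℓ h : ℝ) (hℓ0 : 0 < ℓ) (hℓ1 : ℓ ≤ 1) (hh0 : 0 < h) (hh1 : h ≤ 1) :
    (∫ x : ℝ, ∫ ω,
        |∫ z in (b (r₀ + ε))..(b (l₀ - ε)), ∫ y in Set.Iic (-x),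
            (Kh K ℓ (-(binvEst K l₀ r₀ ε h (bhat ω) z) - y)
              - Kh K ℓ (-(binv z) - y))| ∂P) ≤
      ∫ z in Set.Icc (b (r₀ + ε)) (b (l₀ - ε)),
        ∫ ω, |binvEst K l₀ r₀ ε h (bhat ω) z - binv z| ∂P :=
  stmt8_general l₀ r₀ ε mb K b b' binv hlr hε hmb hK0 hK2 hKsupp hKint hbd hb'le hbinv Ω P bhat
    hbhat ℓ h hℓ0 hh0
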